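/- Compatibility condition for the linearized power system: let (u, m, H̄) be a classical solution of the power-type ergodic MFG system with α > 0, let i ∈ {1,…,n}, and let (ũ, m̃, c) be a classical solution of the associated linearized system in direction e_i. Then c = ∫_Q (∇u+P)·e_i m dy − q α^q ∫_Q m^q m̃ dy; in particular c = b̄·e_i − q α^q ∫_Q m^q m̃ dy, where b̄ = ∫_Q (∇u+P) m dy is the effective drift. -/

import Mathlib

open MeasureTheory Real

/-- Partial derivative in direction `i`. -/
noncomputable def pd {n : ℕ} (i : Fin n) (f : (Fin n → ℝ) → ℝ) (x : Fin n → ℝ) : ℝ :=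
  fderiv ℝ f x (Pi.single i 1)

/-- Laplacian: sum of second partial derivatives. -/
noncomputable def lap {n : ℕ} (f : (Fin n → ℝ) → ℝ) (x : Fin n → ℝ) : ℝ :=
  ∑ i, pd i (pd i f) x

/-- Divergence of a vector field. -/
noncomputable def dvg {n : ℕ} (F : (Fin n → ℝ) → Fin n → ℝ) (x : Fin n → ℝ) : ℝ :=
  ∑ i, pd i (fun y => F y i) x

/-- `ℤⁿ`-periodicity. -/
def ZPeriodic {n : ℕ} (f : (Fin n → ℝ) → ℝ) : Prop :=
  ∀ (k : Fin n → ℤ) (x : Fin n → ℝ), f (x + fun i => (k i : ℝ)) = f x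

/-- The unit cube `Q = [0,1]ⁿ`. -/
def unitCube (n : ℕ) : Set (Fin n → ℝ) := Set.Icc 0 1

/-- A classical solution `(u, m, H)` of the power-type ergodic MFG system
`-Δu + ½|∇u+P|² - v - αᑫ mᑫ = H`, `-Δm - div(m(∇u+P)) = 0`, `∫ u = 0`, `∫ m = 1`. -/
structure PowerMFG {n : ℕ} (v : (Fin n → ℝ) → ℝ) (P : Fin n → ℝ) (α q : ℝ)
    (u m : (Fin n → ℝ) → ℝ) (H : ℝ) : Prop where
  hu : ContDiff ℝ 2 u
  hm : ContDiff ℝ 2 m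
  hup : ZPeriodic u
  hmp : ZPeriodic m
  hmpos : ∀ x, 0 < m x
  hHJB : ∀ x, -lap u x + (∑ i, (pd i u x + P i) ^ 2) / 2 - v x - α ^ q * (m x) ^ q = H
  hFP : ∀ x, -lap m x - dvg (fun y j => m y * (pd j u y + P j)) x = 0
  humean : (∫ y in unitCube n, u y) = 0
  hmmean : (∫ y in unitCube n, m y) = 1

/-- A classical solution `(ũ, m̃, c)` of the system obtained linearizing the power-type
ergodic MFG system in the direction `e i`. -/
structure LinPowerMFG {n : ℕ} (P : Fin n → ℝ) (α q : ℝ)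
    (u m : (Fin n → ℝ) → ℝ) (i : Fin n)
    (ut mt : (Fin n → ℝ) → ℝ) (c : ℝ) : Prop where
  hut : ContDiff ℝ 2 ut
  hmt : ContDiff ℝ 2 mt
  hutp : ZPeriodic ut
  hmtp : ZPeriodic mt
  heq1 : ∀ x, -lap ut x + (∑ j, pd j ut x * (pd j u x + P j)) + (pd i u x + P i)
      - q * α ^ q * (m x) ^ (q - 1) * mt x = c
  heq2 : ∀ x, -lap mt x - dvg (fun y j => (pd j u y + P j) * mt y) x
      = dvg (fun y j => m y * (pd j ut y + (Pi.single i 1 : Fin n → ℝ) j)) x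
  hutmean : (∫ y in unitCube n, ut y) = 0
  hmtmean : (∫ y in unitCube n, mt y) = 0

lemma pd_contDiff {n : ℕ} (j : Fin n) {f : (Fin n → ℝ) → ℝ} (hf : ContDiff ℝ 2 f) :
    ContDiff ℝ 1 (pd j f) :=
  (hf.fderiv_right (by norm_num)).clm_apply contDiff_const

lemma pd_continuous {n : ℕ} (j : Fin n) {f : (Fin n → ℝ) → ℝ} (hf : ContDiff ℝ 1 f) :
    Continuous (pd j f) :=
  (((hf.fderiv_right (m := 0) (by norm_num)).clm_apply contDiff_const)).continuous

lemma pd_periodic {n : ℕ} (j : Fin n) {f : (Fin n → ℝ) → ℝ} (hf : Differentiable ℝ f)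
    (hp : ZPeriodic f) : ZPeriodic (pd j f) := by
  intro k x
  have h1 : HasFDerivAt (fun y : Fin n → ℝ => f (y + fun i => (k i : ℝ)))
      (fderiv ℝ f (x + fun i => (k i : ℝ))) x := by
    have := (hf (x + fun i => (k i : ℝ))).hasFDerivAt.comp x
      ((hasFDerivAt_id x).add_const (fun i => (k i : ℝ)))
    simpa [Function.comp_def] using this
  have h2 : (fun y : Fin n → ℝ => f (y + fun i => (k i : ℝ))) = f := funext fun y => hp k y
  rw [h2] at h1
  simp only [pd, h1.fderiv]

lemma pd_mul {n : ℕ} (j : Fin n) {f g : (Fin n → ℝ) → ℝ} (hf : Differentiable ℝ f)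
    (hg : Differentiable ℝ g) (x : Fin n → ℝ) :
    pd j (fun y => f y * g y) x = pd j f x * g x + f x * pd j g x := by
  simp only [pd, fderiv_fun_mul (hf x) (hg x), ContinuousLinearMap.add_apply,
    ContinuousLinearMap.coe_smul', Pi.smul_apply, smul_eq_mul]
  ring

lemma pd_comb {n : ℕ} (j : Fin n) {f g h : (Fin n → ℝ) → ℝ} {x : Fin n → ℝ}
    (hf : DifferentiableAt ℝ f x) (hg : DifferentiableAt ℝ g x) (hh : DifferentiableAt ℝ h x) :
    pd j (fun y => f y - g y + h y) x = pd j f x - pd j g x + pd j h x := by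
  have hd : fderiv ℝ (fun y => f y - g y + h y) x = fderiv ℝ f x - fderiv ℝ g x + fderiv ℝ h x := by
    rw [fderiv_fun_add (hf.fun_sub hg) hh, fderiv_fun_sub hf hg]
  simp [pd, hd]

lemma intDvgZero {n : ℕ} (F : (Fin (n + 1) → ℝ) → Fin (n + 1) → ℝ)
    (hF : ∀ j, ContDiff ℝ 1 (fun y => F y j)) (hper : ∀ j, ZPeriodic (fun y => F y j)) :
    (∫ x in unitCube (n + 1), dvg F x) = 0 := by
  have hle : (0 : Fin (n + 1) → ℝ) ≤ 1 := fun _ => zero_le_one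
  have key := integral_divergence_of_hasFDerivAt_off_countable' (E := ℝ) 0 1 hle
    (fun i y => F y i) (fun i x => fderiv ℝ (fun y => F y i) x) ∅ Set.countable_empty
    (fun i => (hF i).continuous.continuousOn)
    (fun x _ i => ((hF i).differentiable one_ne_zero x).hasFDerivAt)
    ?_
  · have hL : (∫ x in unitCube (n + 1), dvg F x)
        = ∫ x in Set.Icc (0 : Fin (n+1) → ℝ) 1,
            ∑ j, fderiv ℝ (fun y => F y j) x (Pi.single j 1) := by
      rfl
    rw [hL, key]
    apply Finset.sum_eq_zero
    intro j _
    have hface : ∀ x : Fin n → ℝ,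
        F (j.insertNth ((1 : Fin (n+1) → ℝ) j) x) j = F (j.insertNth ((0 : Fin (n+1) → ℝ) j) x) j := by
      intro x
      have hk := hper j (Pi.single j 1) (j.insertNth ((0 : Fin (n+1) → ℝ) j) x)
      have hx : (j.insertNth ((0 : Fin (n+1) → ℝ) j) x + fun i => ((Pi.single j 1 : Fin (n+1) → ℤ) i : ℝ))
          = j.insertNth ((1 : Fin (n+1) → ℝ) j) x := by
        funext l
        rcases eq_or_ne l j with rfl | hl
        · simp
        · obtain ⟨l', rfl⟩ := Fin.exists_succAbove_eq hl
          simp [Fin.insertNth_apply_succAbove, Pi.single_eq_of_ne (Fin.succAbove_ne j l')]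
      rw [← hx]; exact hk
    simp only [hface, sub_self]
  · apply (Continuous.integrableOn_Icc ?_)
    exact continuous_finset_sum _ fun j _ => by
      have := pd_continuous j (hF j)
      exact this

/-- Compatibility condition for the linearized power system. -/
theorem lin_power_mfg_compatibility {n : ℕ} (hn : 1 ≤ n)
    (v : (Fin n → ℝ) → ℝ) (hv0 : ∀ x, 0 ≤ v x) (hvlip : ∃ K, LipschitzWith K v) (hvper : ZPeriodic v)
    (P : Fin n → ℝ) (α q : ℝ) (hα : 0 < α) (hq : 0 < q)
    (u m : (Fin n → ℝ) → ℝ) (H : ℝ)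
    (h : PowerMFG v P α q u m H)
    (i : Fin n) (ut mt : (Fin n → ℝ) → ℝ) (c : ℝ)
    (hlin : LinPowerMFG P α q u m i ut mt c)
    (b : Fin n → ℝ)
    (hb : ∀ j, b j = ∫ y in unitCube n, (pd j u y + P j) * m y) :
    c = (∫ y in unitCube n, (pd i u y + P i) * m y)
        - q * α ^ q * ∫ y in unitCube n, (m y) ^ q * mt y
    ∧ c = b i - q * α ^ q * ∫ y in unitCube n, (m y) ^ q * mt y := by
  obtain ⟨n', rfl⟩ : ∃ n', n = n' + 1 := ⟨n - 1, (Nat.succ_pred_eq_of_pos hn).symm⟩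
  -- basic regularity facts
  have hu1 : ContDiff ℝ 1 u := h.hu.of_le one_le_two
  have hm1 : ContDiff ℝ 1 m := h.hm.of_le one_le_two
  have hut1 : ContDiff ℝ 1 ut := hlin.hut.of_le one_le_two
  have hud : Differentiable ℝ u := hu1.differentiable one_ne_zero
  have hmd : Differentiable ℝ m := hm1.differentiable one_ne_zero
  have hutd : Differentiable ℝ ut := hut1.differentiable one_ne_zero
  have hpdu : ∀ j, ContDiff ℝ 1 (pd j u) := fun j => pd_contDiff j h.hu
  have hpdm : ∀ j, ContDiff ℝ 1 (pd j m) := fun j => pd_contDiff j h.hm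
  have hpdut : ∀ j, ContDiff ℝ 1 (pd j ut) := fun j => pd_contDiff j hlin.hut
  have hpdu' : ∀ j, Differentiable ℝ (pd j u) := fun j => (hpdu j).differentiable one_ne_zero
  have hpdm' : ∀ j, Differentiable ℝ (pd j m) := fun j => (hpdm j).differentiable one_ne_zero
  have hpdut' : ∀ j, Differentiable ℝ (pd j ut) := fun j => (hpdut j).differentiable one_ne_zero
  have hmbd : ∀ j, Differentiable ℝ (fun y => m y * (pd j u y + P j)) :=
    fun j => hmd.mul ((hpdu' j).add_const (P j))
  -- the auxiliary vector field
  set W : (Fin (n' + 1) → ℝ) → Fin (n' + 1) → ℝ :=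
    fun y j => ut y * pd j m y - m y * pd j ut y + ut y * (m y * (pd j u y + P j)) with hWdef
  have hWc : ∀ j, ContDiff ℝ 1 (fun y => W y j) := fun j =>
    ((hut1.mul (hpdm j)).sub (hm1.mul (hpdut j))).add
      (hut1.mul (hm1.mul ((hpdu j).add contDiff_const)))
  have hWper : ∀ j, ZPeriodic (fun y => W y j) := by
    intro j k x
    simp only [hWdef]
    rw [pd_periodic j hmd h.hmp k x, pd_periodic j hutd hlin.hutp k x,
      pd_periodic j hud h.hup k x, h.hmp k x, hlin.hutp k x]
  have hdvgW : (∫ x in unitCube (n' + 1), dvg W x) = 0 := intDvgZero W hWc hWper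
  -- pointwise identity: dvg W = m * (-Δũ + ∇ũ·(∇u+P))
  have claim1 : ∀ x, dvg W x = m x * (-lap ut x + ∑ j, pd j ut x * (pd j u x + P j)) := by
    intro x
    have e_j : ∀ j, pd j (fun y => W y j) x
        = ut x * pd j (pd j m) x - m x * pd j (pd j ut) x
          + m x * (pd j ut x * (pd j u x + P j))
          + ut x * pd j (fun y => m y * (pd j u y + P j)) x := by
      intro j
      have e1 : pd j (fun y => W y j) x
          = pd j (fun y => ut y * pd j m y) x - pd j (fun y => m y * pd j ut y) x
            + pd j (fun y => ut y * (m y * (pd j u y + P j))) x :=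
        pd_comb j ((hutd.mul (hpdm' j)) x) ((hmd.mul (hpdut' j)) x) ((hutd.mul (hmbd j)) x)
      have e2 : pd j (fun y => ut y * pd j m y) x
          = pd j ut x * pd j m x + ut x * pd j (pd j m) x := pd_mul j hutd (hpdm' j) x
      have e3 : pd j (fun y => m y * pd j ut y) x
          = pd j m x * pd j ut x + m x * pd j (pd j ut) x := pd_mul j hmd (hpdut' j) x
      have e4 : pd j (fun y => ut y * (m y * (pd j u y + P j))) x
          = pd j ut x * (m x * (pd j u x + P j))
            + ut x * pd j (fun y => m y * (pd j u y + P j)) x := pd_mul j hutd (hmbd j) x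
      rw [e1, e2, e3, e4]; ring
    have hsum1 : dvg W x = ut x * lap m x - m x * lap ut x
        + m x * (∑ j, pd j ut x * (pd j u x + P j))
        + ut x * (∑ j, pd j (fun y => m y * (pd j u y + P j)) x) := by
      unfold dvg lap
      rw [Finset.sum_congr rfl fun j _ => e_j j]
      simp only [Finset.sum_add_distrib, Finset.sum_sub_distrib, Finset.mul_sum]
    have hFPx : -lap m x - (∑ j, pd j (fun y => m y * (pd j u y + P j)) x) = 0 := by
      have := h.hFP x
      simpa [dvg] using this
    linear_combination hsum1 - ut x * hFPx
  -- pointwise identity: integrand equality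
  have claim2 : ∀ x, dvg W x + (pd i u x + P i) * m x - q * α ^ q * ((m x) ^ q * mt x)
      = c * m x := by
    intro x
    have hrw : (m x) ^ (q - 1) * (m x) = (m x) ^ q := by
      rw [← Real.rpow_add_one (h.hmpos x).ne' (q - 1), sub_add_cancel]
    linear_combination claim1 x + m x * (hlin.heq1 x) + (q * α ^ q * mt x) * hrw
  -- integrability
  have c1 : Continuous (fun x => dvg W x) := by
    unfold dvg
    exact continuous_finset_sum _ fun j _ => pd_continuous j (hWc j)
  have c2 : Continuous (fun x => (pd i u x + P i) * m x) :=
    ((pd_continuous i hu1).add continuous_const).mul hm1.continuous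
  have c3 : Continuous (fun x => (m x) ^ q * mt x) :=
    (hm1.continuous.rpow_const fun x => Or.inl (h.hmpos x).ne').mul hlin.hmt.continuous
  have i1 : IntegrableOn (fun x => dvg W x) (unitCube (n' + 1)) := c1.integrableOn_Icc
  have i2 : IntegrableOn (fun x => (pd i u x + P i) * m x) (unitCube (n' + 1)) :=
    c2.integrableOn_Icc
  have i3 : IntegrableOn (fun x => (m x) ^ q * mt x) (unitCube (n' + 1)) := c3.integrableOn_Icc
  -- integrate claim2 over the cube
  have hE : (∫ x in unitCube (n' + 1), dvg W x)
      + (∫ x in unitCube (n' + 1), (pd i u x + P i) * m x)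
      - q * α ^ q * (∫ x in unitCube (n' + 1), (m x) ^ q * mt x) = c := by
    have hsplit : (∫ x in unitCube (n' + 1),
        (dvg W x + (pd i u x + P i) * m x - q * α ^ q * ((m x) ^ q * mt x)))
        = (∫ x in unitCube (n' + 1), dvg W x)
          + (∫ x in unitCube (n' + 1), (pd i u x + P i) * m x)
          - q * α ^ q * (∫ x in unitCube (n' + 1), (m x) ^ q * mt x) := by
      have i12 : IntegrableOn (fun x => dvg W x + (pd i u x + P i) * m x)
          (unitCube (n' + 1)) := i1.add i2
      have i3' : IntegrableOn (fun x => q * α ^ q * ((m x) ^ q * mt x))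
          (unitCube (n' + 1)) := i3.const_mul (q * α ^ q)
      rw [integral_sub i12 i3', integral_add i1 i2, integral_const_mul]
    rw [← hsplit]
    calc (∫ x in unitCube (n' + 1),
          (dvg W x + (pd i u x + P i) * m x - q * α ^ q * ((m x) ^ q * mt x)))
        = ∫ x in unitCube (n' + 1), c * m x := by simp only [claim2]
      _ = c := by rw [integral_const_mul, h.hmmean, mul_one]
  rw [hdvgW, zero_add] at hE
  exact ⟨hE.symm, by rw [hb i]; exact hE.symm⟩
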